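/- Let (S, η, μ, S', σ, μ') be a completely iterative monad on A. For f : X → S(S'X + Y), let f̄ = μ_{X+Y} ∘ S(can) ∘ S(σ_X + η_Y) ∘ f : X → S(X+Y), where can = [S inl, S inr] : SX + SY → S(X+Y). Then f̄ is a guarded equation morphism, and a morphism s : X → SY is a solution of f̄ (i.e., s = μ_Y ∘ S[s, η_Y] ∘ f̄) iff s, viewed as a morphism Y → X in the dual Kleisli category (A_S)^op, satisfies the guarded fixpoint equation s = f ∘ (p_X × Y) ∘ ⟨s, Y⟩ for the induced structure. In particular, every such f has a unique fixpoint in (A_S)^op. -/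

import Mathlib

open CategoryTheory CategoryTheory.Limits

/-- For a completely iterative monad `(S, η, μ, S', σ, μ')` on `A` and
`f : X ⟶ S(S'X + Y)`, the morphism `f̄ = μ ∘ S can ∘ S(σ + η) ∘ f : X ⟶ S(X+Y)` is a
guarded equation morphism, solutions of `f̄` coincide with solutions of the guarded
fixpoint equation for `f` in the dual Kleisli category (which reads
`s = μ ∘ S[μ ∘ Ss ∘ σ, η] ∘ f` in `A`), and in particular `f` has a unique such
fixpoint. -/
theorem stmt18 {A : Type*} [Category A] [HasBinaryCoproducts A]
    (hmono : ∀ U V : A,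
      Mono (coprod.inl : U ⟶ U ⨿ V) ∧ Mono (coprod.inr : V ⟶ U ⨿ V))
    (T : Monad A) (S' : A ⥤ A) (σ : S' ⟶ T.toFunctor)
    (μ' : T.toFunctor ⋙ S' ⟶ S')
    (hcoprod : ∀ U : A, Nonempty (IsColimit (BinaryCofan.mk (σ.app U) (T.η.app U))))
    (hrestrict : ∀ U : A, σ.app (T.obj U) ≫ T.μ.app U = μ'.app U ≫ σ.app U)
    (hci : ∀ {U V : A} (e : U ⟶ T.obj (U ⨿ V)),
      (∃ g : U ⟶ S'.obj (U ⨿ V) ⨿ V,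
        e = g ≫ coprod.desc (σ.app (U ⨿ V)) (coprod.inr ≫ T.η.app (U ⨿ V))) →
      ∃! s : U ⟶ T.obj V, s = e ≫ T.map (coprod.desc s (T.η.app V)) ≫ T.μ.app V)
    {X Y : A} (f : X ⟶ T.obj (S'.obj X ⨿ Y)) :
    (∃ g : X ⟶ S'.obj (X ⨿ Y) ⨿ Y,
      f ≫ T.map (coprod.map (σ.app X) (T.η.app Y)) ≫
          T.map (coprod.desc (T.map coprod.inl) (T.map coprod.inr)) ≫ T.μ.app (X ⨿ Y)
        = g ≫ coprod.desc (σ.app (X ⨿ Y)) (coprod.inr ≫ T.η.app (X ⨿ Y))) ∧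
    (∀ s : X ⟶ T.obj Y,
      (s = (f ≫ T.map (coprod.map (σ.app X) (T.η.app Y)) ≫
              T.map (coprod.desc (T.map coprod.inl) (T.map coprod.inr)) ≫
              T.μ.app (X ⨿ Y)) ≫
            T.map (coprod.desc s (T.η.app Y)) ≫ T.μ.app Y)
        ↔ (s = f ≫
            T.map (coprod.desc (σ.app X ≫ T.map s ≫ T.μ.app Y) (T.η.app Y)) ≫
            T.μ.app Y)) ∧
    (∃! s : X ⟶ T.obj Y,
      s = f ≫ T.map (coprod.desc (σ.app X ≫ T.map s ≫ T.μ.app Y) (T.η.app Y)) ≫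
        T.μ.app Y) := by

  have key : ∀ s : X ⟶ T.obj Y,
      (f ≫ T.map (coprod.map (σ.app X) (T.η.app Y)) ≫
          T.map (coprod.desc (T.map coprod.inl) (T.map coprod.inr)) ≫ T.μ.app (X ⨿ Y)) ≫
        T.map (coprod.desc s (T.η.app Y)) ≫ T.μ.app Y
      = f ≫ T.map (coprod.desc (σ.app X ≫ T.map s ≫ T.μ.app Y) (T.η.app Y)) ≫
          T.μ.app Y := by
    intro s
    have hnat : T.μ.app (X ⨿ Y) ≫ T.map (coprod.desc s (T.η.app Y)) =
        T.map (T.map (coprod.desc s (T.η.app Y))) ≫ T.μ.app (T.obj Y) :=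
      (T.μ.naturality (coprod.desc s (T.η.app Y))).symm
    have hassoc : T.μ.app (T.obj Y) ≫ T.μ.app Y = T.map (T.μ.app Y) ≫ T.μ.app Y := by
      simp [Monad.assoc]
    have hcomp : coprod.map (σ.app X) (T.η.app Y) ≫
        coprod.desc (T.map coprod.inl) (T.map coprod.inr) ≫
        T.map (coprod.desc s (T.η.app Y)) ≫ T.μ.app Y =
        coprod.desc (σ.app X ≫ T.map s ≫ T.μ.app Y) (T.η.app Y) := by
      apply coprod.hom_ext
      · rw [coprod.inl_map_assoc, coprod.inl_desc_assoc, coprod.inl_desc,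
          ← Functor.map_comp_assoc, coprod.inl_desc]
      · rw [coprod.inr_map_assoc, coprod.inr_desc_assoc, coprod.inr_desc,
          ← Functor.map_comp_assoc, coprod.inr_desc]
        simp
    simp only [Category.assoc]
    rw [reassoc_of% hnat, hassoc]
    have hc2 := congrArg (fun t : S'.obj X ⨿ Y ⟶ T.obj Y => f ≫ T.map t ≫ T.μ.app Y) hcomp
    simp only [Functor.map_comp, Category.assoc] at hc2
    exact hc2
  have hguard : ∃ g : X ⟶ S'.obj (X ⨿ Y) ⨿ Y,
      f ≫ T.map (coprod.map (σ.app X) (T.η.app Y)) ≫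
          T.map (coprod.desc (T.map coprod.inl) (T.map coprod.inr)) ≫ T.μ.app (X ⨿ Y)
        = g ≫ coprod.desc (σ.app (X ⨿ Y)) (coprod.inr ≫ T.η.app (X ⨿ Y)) := by
    set h : S'.obj X ⨿ Y ⟶ T.obj (X ⨿ Y) :=
      coprod.map (σ.app X) (T.η.app Y) ≫ coprod.desc (T.map coprod.inl) (T.map coprod.inr)
      with hh
    obtain ⟨hc⟩ := hcoprod (S'.obj X ⨿ Y)
    set k : T.obj (S'.obj X ⨿ Y) ⟶ S'.obj (X ⨿ Y) ⨿ Y :=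
      hc.desc (BinaryCofan.mk (S'.map h ≫ μ'.app (X ⨿ Y) ≫ coprod.inl)
        (coprod.map (S'.map coprod.inl) (𝟙 Y))) with hk
    have fac1 : σ.app (S'.obj X ⨿ Y) ≫ k = S'.map h ≫ μ'.app (X ⨿ Y) ≫ coprod.inl :=
      hc.fac _ ⟨WalkingPair.left⟩
    have fac2 : T.η.app (S'.obj X ⨿ Y) ≫ k = coprod.map (S'.map coprod.inl) (𝟙 Y) :=
      hc.fac _ ⟨WalkingPair.right⟩
    refine ⟨f ≫ k, ?_⟩
    have main : T.map h ≫ T.μ.app (X ⨿ Y) =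
        k ≫ coprod.desc (σ.app (X ⨿ Y)) (coprod.inr ≫ T.η.app (X ⨿ Y)) := by
      apply BinaryCofan.IsColimit.hom_ext hc
      · show σ.app (S'.obj X ⨿ Y) ≫ T.map h ≫ T.μ.app (X ⨿ Y) = σ.app (S'.obj X ⨿ Y) ≫ _
        rw [reassoc_of% fac1]
        have hn : S'.map h ≫ σ.app (T.obj (X ⨿ Y)) = σ.app (S'.obj X ⨿ Y) ≫ T.map h :=
          σ.naturality h
        rw [← reassoc_of% hn, hrestrict]
        simp
        erw [coprod.inl_desc]
      · show T.η.app (S'.obj X ⨿ Y) ≫ T.map h ≫ T.μ.app (X ⨿ Y) =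
          T.η.app (S'.obj X ⨿ Y) ≫ _
        rw [reassoc_of% fac2]
        have hη : T.η.app (S'.obj X ⨿ Y) ≫ T.map h = h ≫ T.η.app (T.obj (X ⨿ Y)) :=
          (T.η.naturality h).symm
        rw [reassoc_of% hη]
        simp only [Monad.left_unit, Category.comp_id]
        apply coprod.hom_ext
        · simp [hh]
          erw [coprod.inl_desc, coprod.inl_desc]
        · rw [hh]; simp
          erw [coprod.inr_desc, coprod.inr_desc]
          exact (T.η.naturality (coprod.inr : Y ⟶ X ⨿ Y)).symm
    calc f ≫ T.map (coprod.map (σ.app X) (T.η.app Y)) ≫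
          T.map (coprod.desc (T.map coprod.inl) (T.map coprod.inr)) ≫ T.μ.app (X ⨿ Y)
        = f ≫ T.map h ≫ T.μ.app (X ⨿ Y) := by
          rw [hh, Functor.map_comp]; simp
      _ = (f ≫ k) ≫ coprod.desc (σ.app (X ⨿ Y)) (coprod.inr ≫ T.η.app (X ⨿ Y)) := by
          rw [main]; simp
  refine ⟨hguard, fun s => by rw [key s], ?_⟩
  obtain ⟨s₀, hs₀, huniq⟩ := hci (f ≫ T.map (coprod.map (σ.app X) (T.η.app Y)) ≫
      T.map (coprod.desc (T.map coprod.inl) (T.map coprod.inr)) ≫ T.μ.app (X ⨿ Y)) hguard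
  exact ⟨s₀, hs₀.trans (key s₀), fun s hs => huniq s (hs.trans (key s).symm)⟩
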